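/- arXiv:1706.04462 — 4 statements merged into one kernel-verified Lean document; each statement's English description precedes it below -/
import Mathlib

section
/- Let $(\lambda_j)_{j\geq 1}$ be a nonnegative, nonincreasing summable sequence. Then for every real $x > 0$, $\sum_{j\geq 0} 2^j \lambda_{\lfloor 2^j x\rfloor} \leq \phi(x) \sum_{j\geq 1}\lambda_j$, where $\phi(x) = \frac{4}{x}$ if $x \geq 1$ and $\phi(x) = \frac{4}{x}(1 - \log_2 x)$ if $0 < x < 1$. -/
/-!
With `u j = ⌊2^j x / 2⌋₊` one has `2 u j ≤ u (j+1)` and the blocks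
`(u j, u (j+1)]` are disjoint. The block ending at `n = ⌊2^j x⌋₊` has at least `n/2` terms, each
`≥ λ_n` by monotonicity, while `2^j x < n + 1 ≤ 2n`; hence `2^j λ_n ≤ (4/x) ∑_{(u j, u (j+1)]} λ`,
and summing over `j` gives the bound `(4/x) ∑ λ`, which is at most `φ(x) ∑ λ`.
-/

open Finset

theorem Nat.two_mul_floor_le_floor_two_mul {R : Type*} [Semiring R] [LinearOrder R]
    [FloorSemiring R] [IsStrictOrderedRing R] (a : R) : 2 * ⌊a⌋₊ ≤ ⌊2 * a⌋₊ := by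
  have h := Nat.cast_mul_floor_div_cancel (R := R) two_ne_zero a
  rw [Nat.cast_ofNat] at h
  exact h ▸ Nat.mul_div_le _ 2

theorem Finset.sum_range_sum_Ioc_of_monotone {M : Type*} [AddCommMonoid M] (g : ℕ → M)
    {u : ℕ → ℕ} (hu : Monotone u) (J : ℕ) :
    ∑ j ∈ range J, ∑ k ∈ Ioc (u j) (u (j + 1)), g k = ∑ k ∈ Ioc (u 0) (u J), g k := by
  induction J with
  | zero => simp
  | succ J ih =>
    rw [sum_range_succ, ih, sum_Ioc_consecutive _ (hu (Nat.zero_le J)) (hu J.le_succ)]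

theorem AntitoneOn.sub_nsmul_le_sum_Ioc {M : Type*} [AddCommMonoid M] [PartialOrder M]
    [IsOrderedAddMonoid M] {f : ℕ → M} (hf : AntitoneOn f (Set.Ici 1)) (a b : ℕ) :
    (b - a) • f b ≤ ∑ k ∈ Ioc a b, f k := by
  rw [← Nat.card_Ioc]
  refine card_nsmul_le_sum _ _ _ fun k hk => ?_
  rw [mem_Ioc] at hk
  exact hf (Set.mem_Ici.2 (by omega)) (Set.mem_Ici.2 (by omega)) hk.2

theorem mul_le_four_mul_sum_Ioc_floor {lam : ℕ → ℝ} (h0 : lam 0 = 0) (hnonneg : ∀ k, 0 ≤ lam k)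
    (hanti : AntitoneOn lam (Set.Ici 1)) (y : ℝ) {m : ℕ} (hm : 2 * m ≤ ⌊y⌋₊) :
    y * lam ⌊y⌋₊ ≤ 4 * ∑ k ∈ Ioc m ⌊y⌋₊, lam k := by
  set n := ⌊y⌋₊
  rcases Nat.eq_zero_or_pos n with hn0 | hn_pos
  · simp [hn0, h0]
  have hy : y ≤ 2 * n := by
    have := Nat.lt_floor_add_one y
    have : (1 : ℝ) ≤ n := by exact_mod_cast hn_pos
    linarith
  have hcount : 2 * n ≤ 4 * (n - m) := by omega
  calc y * lam n ≤ (2 * n : ℕ) * lam n := by push_cast; gcongr; exact hnonneg n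
    _ ≤ (4 * (n - m) : ℕ) * lam n := by gcongr; exact hnonneg n
    _ = 4 * ((n - m) • lam n) := by push_cast [nsmul_eq_mul]; ring
    _ ≤ 4 * ∑ k ∈ Ioc m n, lam k := by gcongr; exact hanti.sub_nsmul_le_sum_Ioc m n

theorem sum_le_tsum_succ {lam : ℕ → ℝ} (h0 : lam 0 = 0) (hnonneg : ∀ k, 0 ≤ lam k)
    (hsum : Summable lam) (s : Finset ℕ) : ∑ k ∈ s, lam k ≤ ∑' j, lam (j + 1) := by
  calc ∑ k ∈ s, lam k ≤ ∑' k, lam k := hsum.sum_le_tsum s fun k _ => hnonneg k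
    _ = ∑' j, lam (j + 1) := by rw [hsum.tsum_eq_zero_add, h0, zero_add]

theorem four_div_le_condensation_factor {x : ℝ} (hx : 0 < x) :
    4 / x ≤ if 1 ≤ x then 4 / x else 4 / x * (1 - Real.logb 2 x) := by
  split_ifs with h
  · exact le_rfl
  · have hlog : Real.logb 2 x ≤ 0 := Real.logb_nonpos one_lt_two hx.le (le_of_not_ge h)
    have : 0 ≤ 4 / x := by positivity
    nlinarith

/-- Functional version of Cauchy's condensation test: for a nonnegative, nonincreasing,
summable sequence `(λ_j)_{j≥1}` (indexed by the positive integers, extended by `λ_0 = 0`)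
and every `x > 0`, one has `∑_{j≥0} 2^j λ_{⌊2^j x⌋} ≤ φ(x) ∑_{j≥1} λ_j` where
`φ(x) = 4/x` for `x ≥ 1` and `φ(x) = (4/x)(1 - log₂ x)` for `0 < x < 1`. -/
theorem functional_cauchy_condensation (lam : ℕ → ℝ)
    (h0 : lam 0 = 0)
    (hnonneg : ∀ j, 0 ≤ lam j)
    (hmono : ∀ j k, 1 ≤ j → j ≤ k → lam k ≤ lam j)
    (hsum : Summable lam)
    (x : ℝ) (hx : 0 < x) :
    Summable (fun j : ℕ => (2 : ℝ) ^ j * lam (Nat.floor ((2 : ℝ) ^ j * x))) ∧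
      (∑' j : ℕ, (2 : ℝ) ^ j * lam (Nat.floor ((2 : ℝ) ^ j * x))) ≤
        (if 1 ≤ x then 4 / x else 4 / x * (1 - Real.logb 2 x)) * ∑' j : ℕ, lam (j + 1) := by
  have hanti : AntitoneOn lam (Set.Ici 1) := fun j hj k _ hjk => hmono j k hj hjk
  set u : ℕ → ℕ := fun j => ⌊2 ^ j * (x / 2)⌋₊
  have hu_succ (j : ℕ) : u (j + 1) = ⌊2 ^ j * x⌋₊ := by
    simp only [u, pow_succ, mul_assoc, mul_div_cancel₀ x two_ne_zero]
  have hu_double (j : ℕ) : 2 * u j ≤ u (j + 1) := by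
    simpa only [u, pow_succ', mul_assoc] using Nat.two_mul_floor_le_floor_two_mul _
  have hu_mono : Monotone u := monotone_nat_of_le_succ fun j => by have := hu_double j; omega
  have hterm (j : ℕ) :
      2 ^ j * lam ⌊2 ^ j * x⌋₊ ≤ 4 / x * ∑ k ∈ Ioc (u j) (u (j + 1)), lam k := by
    have key := mul_le_four_mul_sum_Ioc_floor h0 hnonneg hanti (2 ^ j * x)
      (hu_succ j ▸ hu_double j)
    rw [hu_succ, div_mul_eq_mul_div, le_div_iff₀ hx]
    linarith
  have hpartial (J : ℕ) :
      ∑ j ∈ range J, 2 ^ j * lam ⌊2 ^ j * x⌋₊ ≤ 4 / x * ∑' j, lam (j + 1) :=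
    calc ∑ j ∈ range J, 2 ^ j * lam ⌊2 ^ j * x⌋₊
        ≤ ∑ j ∈ range J, 4 / x * ∑ k ∈ Ioc (u j) (u (j + 1)), lam k := sum_le_sum fun j _ => hterm j
      _ = 4 / x * ∑ k ∈ Ioc (u 0) (u J), lam k := by
        rw [← mul_sum, sum_range_sum_Ioc_of_monotone lam hu_mono]
      _ ≤ 4 / x * ∑' j, lam (j + 1) := by gcongr; exact sum_le_tsum_succ h0 hnonneg hsum _
  have hterm_nonneg (j : ℕ) : 0 ≤ (2 : ℝ) ^ j * lam ⌊2 ^ j * x⌋₊ :=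
    mul_nonneg (by positivity) (hnonneg _)
  refine ⟨summable_of_sum_range_le hterm_nonneg hpartial, ?_⟩
  calc _ ≤ 4 / x * ∑' j, lam (j + 1) := Real.tsum_le_of_sum_range_le hterm_nonneg hpartial
    _ ≤ _ := by
      gcongr
      · exact tsum_nonneg fun j => hnonneg _
      · exact four_div_le_condensation_factor hx
end

section
/- Let $0 < p < \infty$ and let $\lambda = (\lambda_j)_{j\geq 1} \in \ell^p(\mathbb{N})$. Then the set of $x \in (0,\infty)$ such that $\sum_{j\geq 0} 2^j |\lambda_{\lfloor 2^j x\rfloor}|^p = \infty$ has Lebesgue measure zero. -/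
open MeasureTheory Set Filter
open scoped ENNReal

/-!
The substitution `y = 2^j x` turns `∫_1^2 2^j a_{⌊2^j x⌋} dx` into `∑_{2^j ≤ n < 2^{j+1}} a_n`,
so summing over `j` gives the amalgam identity
`∫_1^2 ∑_j 2^j a_{⌊2^j x⌋} dx = ∑_{n ≥ 1} a_n < ∞` for `a_n = |λ_n|^p`; hence the series converges
for almost every `x ∈ [1, 2)`. Replacing `x` by `2x` drops the first term and halves the others,
so convergence is invariant under `x ↦ 2^k x` for `k ∈ ℤ`, and these dilates of `[1, 2)` cover
`(0, ∞)`.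
-/

theorem Finset.sum_range_sum_Ico_of_monotone {M : Type*} [AddCommMonoid M] (a : ℕ → M)
    {f : ℕ → ℕ} (hf : Monotone f) (J : ℕ) :
    ∑ j ∈ Finset.range J, ∑ n ∈ Finset.Ico (f j) (f (j + 1)), a n
      = ∑ n ∈ Finset.Ico (f 0) (f J), a n := by
  induction J with
  | zero => simp
  | succ J ih =>
    rw [Finset.sum_range_succ, ih, Finset.sum_Ico_consecutive _ (hf J.zero_le) (hf J.le_succ)]

theorem setLIntegral_Ico_natFloor (a : ℕ → ℝ≥0∞) {m M : ℕ} (h : m ≤ M) :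
    ∫⁻ y in Ico (m : ℝ) M, a ⌊y⌋₊ = ∑ n ∈ Finset.Ico m M, a n := by
  induction M, h using Nat.le_induction with
  | base => simp
  | succ M hmM ih =>
    have hunion : Ico (m : ℝ) (M + 1 : ℕ) = Ico (m : ℝ) M ∪ Ico (M : ℝ) (M + 1) := by
      push_cast
      exact (Ico_union_Ico_eq_Ico (by exact_mod_cast hmM) (by linarith)).symm
    have hfloor : ∫⁻ y in Ico (M : ℝ) (M + 1), a ⌊y⌋₊ = a M := by
      rw [setLIntegral_congr_fun measurableSet_Ico fun y hy => by rw [Nat.floor_eq_on_Ico M y hy],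
        setLIntegral_const, Real.volume_Ico, add_sub_cancel_left, ENNReal.ofReal_one, mul_one]
    rw [hunion, lintegral_union measurableSet_Ico Ico_disjoint_Ico_same, ih, hfloor,
      Finset.sum_Ico_succ_top hmM]

theorem setLIntegral_comp_mul_left (g : ℝ → ℝ≥0∞) {c : ℝ} (hc : 0 < c) (s : Set ℝ) :
    ∫⁻ x in s, g (c * x) = ENNReal.ofReal c⁻¹ * ∫⁻ y in (c * ·) '' s, g y := by
  let e := (Homeomorph.mulLeft₀ c hc.ne').toMeasurableEquiv
  have hmap : Measure.map e volume = ENNReal.ofReal c⁻¹ • volume := by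
    rw [← abs_of_pos (inv_pos.mpr hc)]
    exact Real.map_volume_mul_left hc.ne'
  rw [← smul_eq_mul, ← lintegral_smul_measure, ← Measure.restrict_smul, ← hmap,
    e.measurableEmbedding.restrict_map, e.measurableEmbedding.lintegral_map]
  exact congrArg (fun t => ∫⁻ x in t, g (c * x)) (e.preimage_image s).symm

theorem setLIntegral_Ico_one_two_dyadic (a : ℕ → ℝ≥0∞) (j : ℕ) :
    ∫⁻ x in Ico (1 : ℝ) 2, 2 ^ j * a ⌊(2 : ℝ) ^ j * x⌋₊
      = ∑ n ∈ Finset.Ico (2 ^ j) (2 ^ (j + 1)), a n := by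
  have h2j : (0 : ℝ) < 2 ^ j := by positivity
  have hscale : (2 : ℝ≥0∞) ^ j * ENNReal.ofReal ((2 : ℝ) ^ j)⁻¹ = 1 := by
    rw [ENNReal.ofReal_inv_of_pos h2j, ENNReal.ofReal_pow zero_le_two, ENNReal.ofReal_ofNat,
      ENNReal.mul_inv_cancel (by simp) (by simp)]
  rw [lintegral_const_mul' _ _ (by simp), setLIntegral_comp_mul_left (fun y => a ⌊y⌋₊) h2j,
    image_mul_left_Ico h2j, mul_one, ← pow_succ, ← mul_assoc, hscale, one_mul]
  exact_mod_cast setLIntegral_Ico_natFloor a (Nat.pow_le_pow_right two_pos j.le_succ)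

theorem setLIntegral_Ico_one_two_tsum_dyadic (a : ℕ → ℝ≥0∞) :
    ∫⁻ x in Ico (1 : ℝ) 2, ∑' j : ℕ, 2 ^ j * a ⌊(2 : ℝ) ^ j * x⌋₊ = ∑' n, a (n + 1) := by
  have hmeas (j : ℕ) : Measurable fun x : ℝ => 2 ^ j * a ⌊(2 : ℝ) ^ j * x⌋₊ :=
    (measurable_from_nat.comp (Nat.measurable_floor.comp (measurable_const_mul _))).const_mul _
  have hN : Tendsto (fun J : ℕ => 2 ^ J - 1) atTop atTop :=
    (tendsto_sub_atTop_nat 1).comp (tendsto_pow_atTop_atTop_of_one_lt one_lt_two)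
  simp_rw [lintegral_tsum fun j => (hmeas j).aemeasurable, setLIntegral_Ico_one_two_dyadic]
  rw [ENNReal.tsum_eq_iSup_nat, ENNReal.tsum_eq_iSup_nat' hN]
  congr 1
  funext J
  rw [Finset.sum_range_sum_Ico_of_monotone a (pow_right_mono₀ one_le_two) J, pow_zero,
    Finset.sum_Ico_eq_sum_range]
  simp only [add_comm 1]

noncomputable def dyadicOrbitTerm (a : ℕ → ℝ) (x : ℝ) (j : ℕ) : ℝ :=
  2 ^ j * a ⌊(2 : ℝ) ^ j * x⌋₊

theorem ae_summable_dyadicOrbitTerm (a : ℕ → ℝ) (ha : ∀ n, 0 ≤ a n)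
    (hsum : Summable fun n => a (n + 1)) :
    ∀ᵐ x ∂volume.restrict (Ico (1 : ℝ) 2), Summable (dyadicOrbitTerm a x) := by
  have hfin :
      ∫⁻ x in Ico (1 : ℝ) 2, ∑' j : ℕ, 2 ^ j * ENNReal.ofReal (a ⌊(2 : ℝ) ^ j * x⌋₊) ≠ ∞ := by
    rw [setLIntegral_Ico_one_two_tsum_dyadic fun n => ENNReal.ofReal (a n),
      ← ENNReal.ofReal_tsum_of_nonneg (fun n => ha _) hsum]
    exact ENNReal.ofReal_ne_top
  filter_upwards [ae_lt_top' (by fun_prop) hfin] with x hx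
  refine (ENNReal.summable_toReal hx.ne).congr fun j => ?_
  simp [dyadicOrbitTerm, ENNReal.toReal_ofReal (ha _)]

theorem summable_dyadicOrbitTerm_two_mul_iff (a : ℕ → ℝ) (x : ℝ) :
    Summable (dyadicOrbitTerm a (2 * x)) ↔ Summable (dyadicOrbitTerm a x) := by
  have hshift : dyadicOrbitTerm a (2 * x) = fun j => 2⁻¹ * dyadicOrbitTerm a x (j + 1) := by
    funext j
    simp only [dyadicOrbitTerm, pow_succ]
    ring_nf
  rw [hshift, summable_mul_left_iff (by norm_num), summable_nat_add_iff 1]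

theorem zpow_mul_iff_of_mul_iff {P : ℝ → Prop} {b : ℝ} (hb : b ≠ 0) (hP : ∀ x, P (b * x) ↔ P x)
    (k : ℤ) (x : ℝ) : P (b ^ k * x) ↔ P x := by
  induction k using Int.induction_on with
  | zero => simp
  | succ k ih => rw [zpow_add_one₀ hb, mul_comm _ b, mul_assoc, hP, ih]
  | pred k ih => rw [← ih, ← hP, ← mul_assoc, ← zpow_one_add₀ hb, add_sub_cancel]

theorem ae_restrict_Ioi_zero_of_mul_iff {P : ℝ → Prop} {b : ℝ} (hb : 1 < b)
    (hP : ∀ x, P (b * x) ↔ P x) (h : ∀ᵐ x ∂volume.restrict (Ico 1 b), P x) :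
    ∀ᵐ x ∂volume.restrict (Ioi 0), P x := by
  have hb0 : 0 < b := zero_lt_one.trans hb
  rw [ae_restrict_iff' measurableSet_Ioi]
  rw [ae_restrict_iff' measurableSet_Ico] at h
  have hscaled : ∀ᵐ x, ∀ k : ℤ, b ^ k * x ∈ Ico 1 b → P (b ^ k * x) :=
    ae_all_iff.mpr fun k =>
      (Measure.quasiMeasurePreserving_smul volume (zpow_ne_zero k hb0.ne')).ae h
  filter_upwards [hscaled] with x hx hx0
  obtain ⟨k, hk⟩ := exists_mem_Ico_zpow hx0 hb
  have hmem : b ^ (-k) * x ∈ Ico 1 b := by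
    rw [← mem_preimage (f := (b ^ (-k) * ·)), preimage_const_mul_Ico₀ _ _ (zpow_pos hb0 _)]
    simpa [zpow_add_one₀ hb0.ne', mul_comm] using hk
  exact (zpow_mul_iff_of_mul_iff hb0.ne' hP (-k) x).mp (hx (-k) hmem)

theorem ae_summable_dyadic_orbit_general (p : ℝ) (lam : ℕ → ℝ)
    (hsum : Summable (fun j : ℕ => |lam (j + 1)| ^ p)) :
    MeasureTheory.volume
      {x : ℝ | 0 < x ∧
        ¬ Summable (fun j : ℕ => (2 : ℝ) ^ j * |lam (Nat.floor ((2 : ℝ) ^ j * x))| ^ p)} = 0 := by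
  have hnonneg (n : ℕ) : 0 ≤ |lam n| ^ p := Real.rpow_nonneg (abs_nonneg _) p
  have hae : ∀ᵐ x ∂volume.restrict (Ioi 0),
      Summable (dyadicOrbitTerm (fun n => |lam n| ^ p) x) :=
    ae_restrict_Ioi_zero_of_mul_iff one_lt_two (summable_dyadicOrbitTerm_two_mul_iff _)
      (ae_summable_dyadicOrbitTerm _ hnonneg hsum)
  rw [ae_restrict_iff' measurableSet_Ioi, ae_iff] at hae
  simp only [Classical.not_imp, mem_Ioi] at hae
  exact hae

/-- For `0 < p < ∞` and `λ ∈ ℓ^p` (indexed by the positive integers), the set of `x > 0` for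
which `∑_{j≥0} 2^j |λ_{⌊2^j x⌋}|^p` diverges has Lebesgue measure zero. -/
theorem ae_summable_dyadic_orbit (p : ℝ) (hp : 0 < p) (lam : ℕ → ℝ)
    (hsum : Summable (fun j : ℕ => |lam (j + 1)| ^ p)) :
    MeasureTheory.volume
      {x : ℝ | 0 < x ∧
        ¬ Summable (fun j : ℕ => (2 : ℝ) ^ j * |lam (Nat.floor ((2 : ℝ) ^ j * x))| ^ p)} = 0 :=
  ae_summable_dyadic_orbit_general p lam hsum
end

section
/- There exists a sequence $(\zeta_k)_{k\geq 0}$ of nonnegative reals satisfying $\sup_{j\geq 0}\big(2^{-j}\sum_{2^j \leq k < 2^{j+1}} \zeta_k\big) \leq 1$, and such that $\sup_{j\geq 0} \zeta_{\lfloor 2^j x\rfloor} = \infty$ for all $x \in [1,2)$. -/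
/-!
Write `j = ⌊log₂ k⌋` for the dyadic block of `k` and `m = ⌊log₂ j⌋`. Put `ζ k = 2^m` when the
leading `m + 1` binary digits of `k` spell out `j` itself, and `ζ k = 0` otherwise. Only `2^(j-m)`
members of block `j` qualify, so the block average is at most `1`. Conversely, for `x ∈ [1,2)`
and any `m`, the block `j = ⌊2^m x⌋` has `⌊log₂ j⌋ = m`, and the leading `m + 1` digits of
`⌊2^j x⌋` are `⌊2^m x⌋ = j`, so `ζ ⌊2^j x⌋ = 2^m`.
-/

open Finset

lemma card_filter_div_eq_le (s : Finset ℕ) {d : ℕ} (hd : 0 < d) (j : ℕ) :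
    #{k ∈ s | k / d = j} ≤ d := by
  calc #{k ∈ s | k / d = j} ≤ #(Ico (j * d) (j * d + d)) := by
        refine card_le_card fun k hk ↦ ?_
        have := (Nat.div_eq_iff hd).1 (mem_filter.1 hk).2
        rw [mem_Ico]
        omega
    _ = d := by simp

lemma Nat.log_floor_pow_mul {b : ℕ} {x : ℝ} (hx : x ∈ Set.Ico 1 (b : ℝ)) (n : ℕ) :
    Nat.log b ⌊(b : ℝ) ^ n * x⌋₊ = n := by
  have hpos : (0 : ℝ) < (b : ℝ) ^ n := pow_pos (by linarith [hx.1, hx.2]) n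
  apply Nat.log_eq_of_pow_le_of_lt_pow
  · exact Nat.le_floor (by push_cast; nlinarith [hx.1])
  · exact (Nat.floor_lt (by nlinarith [hx.1])).2 (by push_cast; rw [pow_succ]; nlinarith [hx.2])

lemma Nat.floor_pow_mul_div_pow {b : ℕ} (hb : b ≠ 0) (x : ℝ) {m n : ℕ} (h : m ≤ n) :
    ⌊(b : ℝ) ^ n * x⌋₊ / b ^ (n - m) = ⌊(b : ℝ) ^ m * x⌋₊ := by
  rw [← Nat.floor_div_natCast]
  congr 1
  push_cast
  rw [pow_sub₀ _ (Nat.cast_ne_zero.2 hb) h]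
  field_simp

noncomputable def selfDescribingSpike (k : ℕ) : ℝ :=
  if k / 2 ^ (Nat.log 2 k - Nat.log 2 (Nat.log 2 k)) = Nat.log 2 k then
    2 ^ Nat.log 2 (Nat.log 2 k)
  else 0

lemma selfDescribingSpike_nonneg (k : ℕ) : 0 ≤ selfDescribingSpike k := by
  unfold selfDescribingSpike
  split <;> positivity

lemma sum_selfDescribingSpike_Ico_le (j : ℕ) :
    ∑ k ∈ Ico (2 ^ j) (2 ^ (j + 1)), selfDescribingSpike k ≤ 2 ^ j := by
  set m := Nat.log 2 j
  have hblock : ∀ k ∈ Ico (2 ^ j) (2 ^ (j + 1)),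
      selfDescribingSpike k = if k / 2 ^ (j - m) = j then 2 ^ m else 0 := by
    intro k hk
    rw [mem_Ico] at hk
    rw [selfDescribingSpike, Nat.log_eq_of_pow_le_of_lt_pow hk.1 hk.2]
  rw [sum_congr rfl hblock, ← sum_filter, sum_const, nsmul_eq_mul]
  calc (#{k ∈ Ico (2 ^ j) (2 ^ (j + 1)) | k / 2 ^ (j - m) = j} : ℝ) * 2 ^ m
      ≤ ((2 ^ (j - m) : ℕ) : ℝ) * 2 ^ m := by
        gcongr
        exact card_filter_div_eq_le _ (by positivity) j
    _ = 2 ^ j := by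
        push_cast
        rw [← pow_add, Nat.sub_add_cancel (Nat.log_le_self 2 j)]

lemma selfDescribingSpike_floor_two_pow_mul {x : ℝ} (hx : x ∈ Set.Ico 1 2) (m : ℕ) :
    selfDescribingSpike ⌊2 ^ ⌊2 ^ m * x⌋₊ * x⌋₊ = 2 ^ m := by
  have hx₂ : x ∈ Set.Ico 1 ((2 : ℕ) : ℝ) := by exact_mod_cast hx
  have hlog (n : ℕ) : Nat.log 2 ⌊2 ^ n * x⌋₊ = n := by
    simpa using Nat.log_floor_pow_mul hx₂ n
  set j := ⌊2 ^ m * x⌋₊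
  have hmj : m ≤ j := hlog m ▸ Nat.log_le_self 2 j
  have hdigits : ⌊2 ^ j * x⌋₊ / 2 ^ (j - m) = j := by
    simpa using Nat.floor_pow_mul_div_pow two_ne_zero x hmj
  rw [selfDescribingSpike, hlog j, hlog m, hdigits, if_pos rfl]

/-- There is a nonnegative sequence `(ζ_k)` whose dyadic block averages are bounded by `1`,
but such that `sup_{j≥0} ζ_{⌊2^j x⌋} = ∞` for every `x ∈ [1,2)`. -/
theorem exists_block_bounded_orbit_unbounded :
    ∃ ζ : ℕ → ℝ, (∀ k, 0 ≤ ζ k) ∧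
      (∀ j : ℕ, (1 / (2 : ℝ) ^ j) * ∑ k ∈ Finset.Ico (2 ^ j) (2 ^ (j + 1)), ζ k ≤ 1) ∧
      ∀ x ∈ Set.Ico (1 : ℝ) 2, ∀ M : ℝ, ∃ j : ℕ, M < ζ (Nat.floor ((2 : ℝ) ^ j * x)) := by
  refine ⟨selfDescribingSpike, selfDescribingSpike_nonneg, fun j ↦ ?_, fun x hx M ↦ ?_⟩
  · rw [one_div, inv_mul_le_iff₀ (by positivity), mul_one]
    exact sum_selfDescribingSpike_Ico_le j
  · obtain ⟨m, hm⟩ := pow_unbounded_of_one_lt M one_lt_two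
    exact ⟨⌊2 ^ m * x⌋₊, by rwa [selfDescribingSpike_floor_two_pow_mul hx m]⟩
end

section
/- Let $0 < p < q < \infty$. There exists a sequence $(\xi_k)_{k\geq 0}$ of nonnegative reals with $\sum_{j\geq 1}\big(2^{-j}\sum_{2^j\leq k<2^{j+1}}\xi_k\big)^{q/p} < \infty$ and such that for every $x \in [1,2)$, $\sup_{j\geq 0}\xi_{\lfloor 2^j x\rfloor} = \infty$. -/
/-!
Call `k` with `2^b ≤ k < 2^(b+1)` *self-indexing* if its leading `log₂ b + 1` binary digits spell
`b`. For `x ∈ [1,2)` the digits of `⌊2^b x⌋` are those of `x`, so `⌊2^b x⌋` is self-indexing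
whenever `b = ⌊2^m x⌋` is itself a point of the orbit: every orbit meets infinitely many
self-indexing numbers. On the other hand only a fraction `2^{-log₂ b} ≤ 2/b` of the dyadic block
`[2^b, 2^(b+1))` is self-indexing. Putting the weight `b^δ`, `0 < δ < 1 - p/q`, on the
self-indexing numbers of block `b` thus gives block averages `≤ 2 b^{δ-1}`, whose `q/p`-th powers
are summable, while the orbits are unbounded.
-/

open Finset Filter

/-- Writing `b = log₂ k`, the quotient `k / 2^(b - log₂ b)` consists of the leading
`log₂ b + 1` binary digits of `k`. -/
def IsSelfIndexing (k : ℕ) : Prop :=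
  k / 2 ^ (Nat.log 2 k - Nat.log 2 (Nat.log 2 k)) = Nat.log 2 k

instance : DecidablePred IsSelfIndexing := fun _ => inferInstanceAs (Decidable (_ = _))

noncomputable def selfIndexingWeight (w : ℕ → ℝ) (k : ℕ) : ℝ :=
  if IsSelfIndexing k then w (Nat.log 2 k) else 0

lemma selfIndexingWeight_nonneg {w : ℕ → ℝ} (hw : ∀ b, 0 ≤ w b) (k : ℕ) :
    0 ≤ selfIndexingWeight w k := by
  unfold selfIndexingWeight
  split_ifs
  exacts [hw _, le_rfl]

lemma card_filter_isSelfIndexing_Ico_le (b : ℕ) :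
    #{k ∈ Ico (2 ^ b) (2 ^ (b + 1)) | IsSelfIndexing k} ≤ 2 ^ (b - Nat.log 2 b) := by
  set d := 2 ^ (b - Nat.log 2 b)
  have hd : 0 < d := by positivity
  calc #{k ∈ Ico (2 ^ b) (2 ^ (b + 1)) | IsSelfIndexing k}
      ≤ #(Ico (b * d) (b * d + d)) := by
        refine card_le_card fun k hk => ?_
        obtain ⟨hk, hself⟩ := mem_filter.mp hk
        obtain ⟨hlo, hhi⟩ := mem_Ico.mp hk
        have hdiv : k / d = b := by
          rwa [IsSelfIndexing, Nat.log_eq_of_pow_le_of_lt_pow hlo hhi] at hself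
        rw [mem_Ico, ← hdiv]
        exact ⟨Nat.div_mul_le_self k d, Nat.lt_div_mul_add hd⟩
    _ = d := by simp

lemma sum_Ico_selfIndexingWeight_le {w : ℕ → ℝ} {b : ℕ} (hw : 0 ≤ w b) :
    ∑ k ∈ Ico (2 ^ b) (2 ^ (b + 1)), selfIndexingWeight w k ≤ 2 ^ (b - Nat.log 2 b) * w b := by
  have hlog : ∀ k ∈ Ico (2 ^ b) (2 ^ (b + 1)), Nat.log 2 k = b := fun k hk =>
    Nat.log_eq_of_pow_le_of_lt_pow (mem_Ico.mp hk).1 (mem_Ico.mp hk).2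
  calc ∑ k ∈ Ico (2 ^ b) (2 ^ (b + 1)), selfIndexingWeight w k
      = ∑ k ∈ Ico (2 ^ b) (2 ^ (b + 1)) with IsSelfIndexing k, w b := by
        rw [sum_filter]
        refine sum_congr rfl fun k hk => ?_
        rw [selfIndexingWeight, hlog k hk]
    _ ≤ 2 ^ (b - Nat.log 2 b) * w b := by
        rw [sum_const, nsmul_eq_mul]
        gcongr
        exact_mod_cast card_filter_isSelfIndexing_Ico_le b

lemma two_pow_sub_log_mul_lt (b : ℕ) : 2 ^ (b - Nat.log 2 b) * b < 2 ^ (b + 1) :=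
  calc 2 ^ (b - Nat.log 2 b) * b
      < 2 ^ (b - Nat.log 2 b) * 2 ^ (Nat.log 2 b + 1) :=
        Nat.mul_lt_mul_of_pos_left (Nat.lt_pow_succ_log_self one_lt_two b) (by positivity)
    _ = 2 ^ (b + 1) := by
        rw [← pow_add, ← add_assoc, Nat.sub_add_cancel (Nat.log_le_self 2 b)]

lemma blockAverage_selfIndexingWeight_le {w : ℕ → ℝ} {b : ℕ} (hb : 0 < b) (hw : 0 ≤ w b) :
    1 / 2 ^ b * ∑ k ∈ Ico (2 ^ b) (2 ^ (b + 1)), selfIndexingWeight w k ≤ 2 * w b / b := by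
  have hcount : (2 : ℝ) ^ (b - Nat.log 2 b) * b ≤ 2 * 2 ^ b := by
    rw [← pow_succ']
    exact_mod_cast (two_pow_sub_log_mul_lt b).le
  rw [one_div_mul_eq_div, div_le_div_iff₀ (by positivity) (by exact_mod_cast hb)]
  calc (∑ k ∈ Ico (2 ^ b) (2 ^ (b + 1)), selfIndexingWeight w k) * b
      ≤ 2 ^ (b - Nat.log 2 b) * w b * b := by
        gcongr
        exact sum_Ico_selfIndexingWeight_le hw
    _ ≤ 2 * w b * 2 ^ b := by nlinarith

lemma summable_blockAverage_selfIndexingWeight_rpow {r δ : ℝ} (hr : 0 < r)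
    (hrδ : (δ - 1) * r < -1) :
    Summable fun j : ℕ => (1 / (2 : ℝ) ^ (j + 1) *
      ∑ k ∈ Ico (2 ^ (j + 1)) (2 ^ (j + 2)), selfIndexingWeight (fun b => (b : ℝ) ^ δ) k) ^ r := by
  have hw : ∀ b : ℕ, 0 ≤ (b : ℝ) ^ δ := fun b => by positivity
  have hξ := selfIndexingWeight_nonneg hw
  have haverage (j : ℕ) : 0 ≤ 1 / (2 : ℝ) ^ (j + 1) *
      ∑ k ∈ Ico (2 ^ (j + 1)) (2 ^ (j + 2)), selfIndexingWeight (fun b => (b : ℝ) ^ δ) k :=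
    mul_nonneg (by positivity) (sum_nonneg fun k _ => hξ k)
  refine Summable.of_nonneg_of_le (fun j => Real.rpow_nonneg (haverage j) r) (fun j => ?_)
    (((summable_nat_add_iff 1).2 (Real.summable_nat_rpow.2 hrδ)).mul_left (2 ^ r))
  have hb : (0 : ℝ) < ((j + 1 : ℕ) : ℝ) := Nat.cast_pos.mpr j.succ_pos
  calc _ ≤ (2 * ((j + 1 : ℕ) : ℝ) ^ δ / ((j + 1 : ℕ) : ℝ)) ^ r :=
        Real.rpow_le_rpow (haverage j)
          (blockAverage_selfIndexingWeight_le (w := fun b : ℕ => (b : ℝ) ^ δ) j.succ_pos (hw _))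
          hr.le
    _ = 2 ^ r * ((j + 1 : ℕ) : ℝ) ^ ((δ - 1) * r) := by
        rw [mul_div_assoc, ← Real.rpow_sub_one hb.ne',
          Real.mul_rpow zero_le_two (Real.rpow_nonneg hb.le _), Real.rpow_mul hb.le]

lemma Nat.log_floor_two_pow_mul {x : ℝ} (hx : x ∈ Set.Ico 1 2) (b : ℕ) :
    Nat.log 2 ⌊2 ^ b * x⌋₊ = b := by
  have hx0 : 0 ≤ 2 ^ b * x := mul_nonneg (by positivity) (zero_le_one.trans hx.1)
  refine Nat.log_eq_of_pow_le_of_lt_pow (Nat.le_floor ?_) ((Nat.floor_lt hx0).2 ?_)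
  · push_cast
    nlinarith [hx.1, pow_pos (two_pos (α := ℝ)) b]
  · push_cast
    rw [pow_succ]
    nlinarith [hx.2, pow_pos (two_pos (α := ℝ)) b]

lemma floor_two_pow_mul_div_two_pow {x : ℝ} {m b : ℕ} (hmb : m ≤ b) :
    ⌊2 ^ b * x⌋₊ / 2 ^ (b - m) = ⌊2 ^ m * x⌋₊ := by
  rw [← Nat.floor_div_natCast]
  congr 1
  rw [← Nat.sub_add_cancel hmb, pow_add]
  push_cast
  rw [Nat.add_sub_cancel]
  field_simp

lemma isSelfIndexing_floor_two_pow_floor_mul {x : ℝ} (hx : x ∈ Set.Ico 1 2) (m : ℕ) :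
    IsSelfIndexing ⌊2 ^ ⌊2 ^ m * x⌋₊ * x⌋₊ := by
  have hm := Nat.log_floor_two_pow_mul hx m
  rw [IsSelfIndexing, Nat.log_floor_two_pow_mul hx, hm]
  exact floor_two_pow_mul_div_two_pow (hm.symm.trans_le (Nat.log_le_self 2 _))

lemma exists_lt_selfIndexingWeight_floor {w : ℕ → ℝ} (hw : Tendsto w atTop atTop) {x : ℝ}
    (hx : x ∈ Set.Ico 1 2) (M : ℝ) : ∃ j : ℕ, M < selfIndexingWeight w ⌊2 ^ j * x⌋₊ := by
  obtain ⟨N, hN⟩ := eventually_atTop.mp (hw.eventually_gt_atTop M)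
  set b := ⌊2 ^ N * x⌋₊
  refine ⟨b, ?_⟩
  rw [selfIndexingWeight, if_pos (isSelfIndexing_floor_two_pow_floor_mul hx N),
    Nat.log_floor_two_pow_mul hx]
  exact hN b ((Nat.log_floor_two_pow_mul hx N).symm.trans_le (Nat.log_le_self 2 b))

/-- For `0 < p < q < ∞` there is a nonnegative sequence `(ξ_k)` with
`∑_{j≥1} (2^{-j} ∑_{2^j ≤ k < 2^{j+1}} ξ_k)^{q/p} < ∞` whose dyadic orbits
`(ξ_{⌊2^j x⌋})_j` are unbounded for every `x ∈ [1,2)`. -/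
theorem exists_block_qp_summable_orbit_unbounded (p q : ℝ) (hp : 0 < p) (hpq : p < q) :
    ∃ ξ : ℕ → ℝ, (∀ k, 0 ≤ ξ k) ∧
      Summable (fun j : ℕ =>
        ((1 / (2 : ℝ) ^ (j + 1)) * ∑ k ∈ Finset.Ico (2 ^ (j + 1)) (2 ^ (j + 2)), ξ k) ^ (q / p)) ∧
      ∀ x ∈ Set.Ico (1 : ℝ) 2, ∀ M : ℝ, ∃ j : ℕ, M < ξ (Nat.floor ((2 : ℝ) ^ j * x)) := by
  set r := q / p
  have hr : 1 < r := (one_lt_div hp).mpr hpq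
  obtain ⟨δ, hδ, hrδ⟩ : ∃ δ : ℝ, 0 < δ ∧ (δ - 1) * r < -1 := by
    refine ⟨(r - 1) / (2 * r), by positivity, ?_⟩
    have : ((r - 1) / (2 * r) - 1) * r = -(r + 1) / 2 := by field_simp; ring
    linarith
  refine ⟨selfIndexingWeight fun b => (b : ℝ) ^ δ,
    selfIndexingWeight_nonneg fun b => by positivity,
    summable_blockAverage_selfIndexingWeight_rpow (zero_lt_one.trans hr) hrδ,
    fun x hx => exists_lt_selfIndexingWeight_floor ?_ hx⟩
  exact (tendsto_rpow_atTop hδ).comp tendsto_natCast_atTop_atTop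
end
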